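/- If X is a compact space and κ an infinite cardinal, then L(X^c_κ) ≤ 2^{wt(X)·κ}, where X^c_κ is the G^c_κ-modification of X. In particular this strengthens Pytkeev's theorem L(X_κ) ≤ 2^{t(X)·κ}. -/

import Mathlib

open Cardinal Set TopologicalSpace

universe u

/-- The tightness `t(X)`: the least infinite cardinal `κ` such that whenever
`x ∈ closure A` there is `B ⊆ A` with `#B ≤ κ` and `x ∈ closure B`. -/
noncomputable def tightness (X : Type u) [TopologicalSpace X] : Cardinal.{u} :=
  sInf {κ : Cardinal.{u} | ℵ₀ ≤ κ ∧ ∀ (A : Set X) (x : X), x ∈ closure A →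
    ∃ B ⊆ A, #B ≤ κ ∧ x ∈ closure B}

/-- The `κ`-closure of a set `A`. -/
noncomputable def clk {X : Type u} [TopologicalSpace X] (κ : Cardinal.{u}) (A : Set X) : Set X :=
  ⋃ (B : Set X) (_ : B ⊆ A ∧ #B ≤ κ), closure B

/-- A cover `𝒞` witnessing that `wt X ≤ κ`. -/
noncomputable def IsWtWitness {X : Type u} [TopologicalSpace X] (κ : Cardinal.{u}) (𝒞 : Set (Set X)) : Prop :=
  ⋃₀ 𝒞 = Set.univ ∧ #𝒞 ≤ 2 ^ κ ∧ ∀ C ∈ 𝒞, tightness ↥C ≤ κ ∧ clk (2 ^ κ) C = Set.univ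

/-- The weak tightness `wt(X)`. -/
noncomputable def wt (X : Type u) [TopologicalSpace X] : Cardinal.{u} :=
  sInf {κ : Cardinal.{u} | ℵ₀ ≤ κ ∧ ∃ 𝒞 : Set (Set X), IsWtWitness κ 𝒞}

/-- The Lindelöf number `L(X)`. -/
noncomputable def LindelofNumber (X : Type u) [TopologicalSpace X] : Cardinal.{u} :=
  sInf {κ : Cardinal.{u} | ℵ₀ ≤ κ ∧ ∀ 𝒰 : Set (Set X), (∀ U ∈ 𝒰, IsOpen U) →
    ⋃₀ 𝒰 = Set.univ → ∃ 𝒱 ⊆ 𝒰, #𝒱 ≤ κ ∧ ⋃₀ 𝒱 = Set.univ}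

/-- The pseudocharacter `ψ(X)`. -/
noncomputable def psi (X : Type u) [TopologicalSpace X] : Cardinal.{u} :=
  sInf {κ : Cardinal.{u} | ℵ₀ ≤ κ ∧ ∀ x : X, ∃ 𝒰 : Set (Set X),
    #𝒰 ≤ κ ∧ (∀ U ∈ 𝒰, IsOpen U ∧ x ∈ U) ∧ ⋂₀ 𝒰 = {x}}

/-- The closed pseudocharacter `ψ_c(X)`. -/
noncomputable def psic (X : Type u) [TopologicalSpace X] : Cardinal.{u} :=
  sInf {κ : Cardinal.{u} | ℵ₀ ≤ κ ∧ ∀ x : X, ∃ 𝒰 : Set (Set X),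
    #𝒰 ≤ κ ∧ (∀ U ∈ 𝒰, IsOpen U ∧ x ∈ U) ∧ (⋂ U ∈ 𝒰, closure U) = {x}}

/-- `A` is `𝒞`-saturated: `A ∩ C` is dense in `A` for every `C ∈ 𝒞`. -/
noncomputable def Saturated {X : Type u} [TopologicalSpace X] (𝒞 : Set (Set X)) (A : Set X) : Prop :=
  ∀ C ∈ 𝒞, A ⊆ closure (A ∩ C)

/-- The π-character `πχ(x, X)` of a point: least cardinality of a local π-base at `x`. -/
noncomputable def piCharPt {X : Type u} [TopologicalSpace X] (x : X) : Cardinal.{u} :=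
  sInf {κ : Cardinal.{u} | ∃ ℬ : Set (Set X), #ℬ ≤ κ ∧
    (∀ B ∈ ℬ, IsOpen B ∧ B.Nonempty) ∧ ∀ U : Set X, IsOpen U → x ∈ U → ∃ B ∈ ℬ, B ⊆ U}

/-- The π-character `πχ(X)`. -/
noncomputable def piChar (X : Type u) [TopologicalSpace X] : Cardinal.{u} :=
  ⨆ x : X, piCharPt x

/-- The character `χ(x, X)` of a point: least cardinality of a local base at `x`. -/
noncomputable def charPt {X : Type u} [TopologicalSpace X] (x : X) : Cardinal.{u} :=
  sInf {κ : Cardinal.{u} | ∃ ℬ : Set (Set X), #ℬ ≤ κ ∧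
    (∀ B ∈ ℬ, IsOpen B ∧ x ∈ B) ∧ ∀ U : Set X, IsOpen U → x ∈ U → ∃ B ∈ ℬ, B ⊆ U}

/-- The character `χ(X)`. -/
noncomputable def character (X : Type u) [TopologicalSpace X] : Cardinal.{u} :=
  ⨆ x : X, charPt x

/-- The density `d(X)`: least cardinality of a dense subset. -/
noncomputable def density (X : Type u) [TopologicalSpace X] : Cardinal.{u} :=
  sInf {κ : Cardinal.{u} | ∃ D : Set X, Dense D ∧ #D ≤ κ}

/-- A space is homogeneous if its homeomorphism group acts transitively. -/
noncomputable def Homogeneous (X : Type u) [TopologicalSpace X] : Prop :=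
  ∀ x y : X, ∃ h : X ≃ₜ X, h x = y

/-- A space is power homogeneous if some (nonempty) power of it is homogeneous. -/
noncomputable def PowerHomogeneous (X : Type u) [TopologicalSpace X] : Prop :=
  ∃ I : Type u, Nonempty I ∧ Homogeneous (I → X)

/-- A `G^c_κ`-set: `G = ⋂𝒰 = ⋂_{U ∈ 𝒰} closure U` for a family `𝒰` of `≤ κ` open sets. -/
noncomputable def GcSet {X : Type u} [TopologicalSpace X] (κ : Cardinal.{u}) (G : Set X) : Prop :=
  ∃ 𝒰 : Set (Set X), #𝒰 ≤ κ ∧ (∀ U ∈ 𝒰, IsOpen U) ∧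
    G = ⋂₀ 𝒰 ∧ G = ⋂ U ∈ 𝒰, closure U

/-- A subset is subseparable if it is contained in the closure of a countable set. -/
noncomputable def Subseparable {X : Type u} [TopologicalSpace X] (A : Set X) : Prop :=
  ∃ c : Set X, c.Countable ∧ A ⊆ closure c

/-!
Refine an open cover of `X^c_κ` at each point `x` by a `G^c_κ`-set
`G x = ⋂₀ 𝒰 x = ⋂ U ∈ 𝒰 x, closure U`. With `λ = wt X` and a cover `𝒞` witnessing it, a
closing-off argument of length `λ⁺` produces `S` with `#S ≤ 2 ^ (λ * κ)` that is `𝒞`-saturated,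
realises on every `λ`-small `B ⊆ S` each trace `{B ∩ U | U ∈ 𝒰 x}`, and meets the complement of
`⋃ U ∈ ℱ, closure U` whenever a finite family `ℱ` drawn from the `𝒰 z`, `z ∈ S`, misses a point.
Saturation and `t(C) ≤ λ` put every `w ∈ closure S` in the closure of a `λ`-small `B ⊆ S`; a
`z ∈ S` with the same trace on `B` as `w` then has `w ∈ G z`. So the `G z`, `z ∈ S`, cover
`closure S`, and compactness of `closure S` together with the last property shows they cover `X`.
-/

theorem mk_biUnion_le_of_forall_le {ι α : Type u} {s : Set ι} {A : ι → Set α} {c : Cardinal.{u}}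
    (hc : ℵ₀ ≤ c) (hs : #s ≤ c) (hA : ∀ i ∈ s, #(A i) ≤ c) : #(⋃ i ∈ s, A i) ≤ c :=
  (mk_biUnion_le A s).trans <|
    (mul_le_mul' hs (ciSup_le' fun i : s => hA i i.2)).trans (mul_eq_self hc).le

section ClosingOff

variable {α : Type u}

noncomputable def closingStage (F : Set α → Set α) (i : Ordinal.{u}) : Set α :=
  F (⋃ j : Iio i, closingStage F j)
termination_by i
decreasing_by exact j.2

theorem closingStage_eq (F : Set α → Set α) (i : Ordinal.{u}) :
    closingStage F i = F (⋃ j < i, closingStage F j) := by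
  rw [closingStage, iUnion_subtype]
  rfl

theorem exists_mk_le_closed_under {l μ : Cardinal.{u}} (hl : ℵ₀ ≤ l) (hμ : ℵ₀ ≤ μ)
    (hμl : μ ^ l = μ) (f : Set α → Set α) (hf : ∀ B : Set α, #B ≤ l → #(f B) ≤ μ) :
    ∃ S : Set α, #S ≤ μ ∧ ∀ B ⊆ S, #B ≤ l → f B ⊆ S := by
  set F : Set α → Set α := fun A => ⋃ B ∈ {B | B ⊆ A ∧ #B ≤ l}, f B
  have hF : ∀ A : Set α, #A ≤ μ → #(F A) ≤ μ := fun A hA =>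
    mk_biUnion_le_of_forall_le hμ
      ((mk_bounded_subset_le A l).trans (hμl ▸ power_le_power_right (max_le hA hμ)))
      fun B hB => hf B hB.2
  have hsucc : Order.succ l ≤ μ := by
    refine Order.succ_le_of_lt ((cantor l).trans_le ?_)
    exact hμl ▸ power_le_power_right (natCast_lt_aleph0.le.trans hμ)
  set o := (Order.succ l).ord
  have hstage : ∀ i < o, #(closingStage F i) ≤ μ := by
    intro i
    induction i using WellFoundedLT.induction with
    | _ i ih =>
      intro hi
      rw [closingStage_eq]
      refine hF _ (mk_biUnion_le_of_le ?_ hμ _ fun j hj => ih j hj (hj.trans hi))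
      exact (lt_ord.1 hi).le.trans hsucc
  refine ⟨⋃ i < o, closingStage F i,
    mk_biUnion_le_of_le ((card_ord _).le.trans hsucc) hμ _ hstage, ?_⟩
  intro B hBS hB
  -- `o` is regular, so the stages at which the `≤ l` points of `B` appear are bounded below `o`
  choose rank hrank hmem using fun x : B => mem_iUnion₂.1 (hBS x.2)
  have hlim := isSuccLimit_ord (hl.trans (Order.le_succ l))
  have hi : ⨆ x, Order.succ (rank x) < o :=
    Ordinal.iSup_lt_of_lt_cof ((isRegular_succ hl).cof_ord ▸ hB.trans_lt (Order.lt_succ l))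
      fun x => hlim.succ_lt (hrank x)
  refine Subset.trans ?_ (subset_biUnion_of_mem hi)
  rw [closingStage_eq]
  refine subset_biUnion_of_mem (u := f) ⟨fun x hx => mem_biUnion ?_ (hmem ⟨x, hx⟩), hB⟩
  exact (Order.lt_succ _).trans_le (Ordinal.le_iSup (fun y : B => Order.succ (rank y)) ⟨x, hx⟩)

end ClosingOff

theorem exists_mk_le_witnesses {ι α : Type u} (P : ι → α → Prop) :
    ∃ T : Set α, #T ≤ #ι ∧ ∀ i, (∃ x, P i x) → ∃ x ∈ T, P i x :=
  ⟨range fun i : {i // ∃ x, P i x} => i.2.choose, mk_range_le.trans (mk_subtype_le _),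
    fun i hi => ⟨_, ⟨⟨i, hi⟩, rfl⟩, hi.choose_spec⟩⟩

section Topology

variable {X : Type u}

def traceFamily (B : Set X) (𝒰 : Set (Set X)) : Set (Set B) :=
  (Subtype.val ⁻¹' ·) '' 𝒰

variable [TopologicalSpace X]

theorem exists_subset_mk_le_tightness_of_mem_closure {A : Set X} {x : X} (hx : x ∈ closure A) :
    ∃ B ⊆ A, #B ≤ tightness X ∧ x ∈ closure B := by
  have hne : max ℵ₀ #X ∈ {κ : Cardinal.{u} | ℵ₀ ≤ κ ∧ ∀ (A : Set X) (x : X), x ∈ closure A →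
      ∃ B ⊆ A, #B ≤ κ ∧ x ∈ closure B} :=
    ⟨le_max_left _ _, fun A x hx => ⟨A, Subset.rfl, (mk_set_le A).trans (le_max_right _ _), hx⟩⟩
  exact (csInf_mem ⟨_, hne⟩).2 A x hx

theorem exists_subset_mk_le_of_tightness_le {C A : Set X} {l : Cardinal.{u}}
    (hC : tightness C ≤ l) (hAC : A ⊆ C) {w : X} (hwC : w ∈ C) (hw : w ∈ closure A) :
    ∃ B ⊆ A, #B ≤ l ∧ w ∈ closure B := by
  have hw' : (⟨w, hwC⟩ : C) ∈ closure (Subtype.val ⁻¹' A) := by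
    rwa [closure_subtype, Subtype.image_preimage_coe, inter_eq_right.2 hAC]
  obtain ⟨B, hBA, hBl, hwB⟩ := exists_subset_mk_le_tightness_of_mem_closure hw'
  refine ⟨Subtype.val '' B, image_subset_iff.2 hBA, mk_image_le.trans (hBl.trans hC), ?_⟩
  rwa [closure_subtype] at hwB

theorem exists_isWtWitness_wt (X : Type u) [TopologicalSpace X] :
    ℵ₀ ≤ wt X ∧ ∃ 𝒞 : Set (Set X), IsWtWitness (wt X) 𝒞 := by
  have h1 : (1 : Cardinal.{u}) ≤ 2 ^ max ℵ₀ #X :=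
    Cardinal.one_le_iff_ne_zero.2 (power_ne_zero _ two_ne_zero)
  have hne : max ℵ₀ #X ∈ {κ : Cardinal.{u} | ℵ₀ ≤ κ ∧ ∃ 𝒞 : Set (Set X), IsWtWitness κ 𝒞} := by
    refine ⟨le_max_left _ _, {Set.univ}, sUnion_singleton _, by simpa using h1, ?_⟩
    rintro C rfl
    refine ⟨csInf_le' ⟨le_max_left _ _, fun A x hx => ⟨A, Subset.rfl, ?_, hx⟩⟩, ?_⟩
    · exact (mk_set_le A).trans (mk_univ.le.trans (le_max_right _ _))
    · exact eq_univ_of_forall fun x =>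
        mem_iUnion₂.2 ⟨{x}, ⟨subset_univ _, by simpa using h1⟩, subset_closure rfl⟩
  exact csInf_mem ⟨_, hne⟩

theorem IsWtWitness.exists_mk_le_mem_closure_inter {l : Cardinal.{u}} (hl : ℵ₀ ≤ l)
    {𝒞 : Set (Set X)} (h𝒞 : IsWtWitness l 𝒞) (a : X) :
    ∃ T : Set X, #T ≤ 2 ^ l ∧ ∀ C ∈ 𝒞, a ∈ closure (T ∩ C) := by
  have hD : ∀ C ∈ 𝒞, ∃ D ⊆ C, #D ≤ 2 ^ l ∧ a ∈ closure D := fun C hC => by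
    have ha : a ∈ clk (2 ^ l) C := (h𝒞.2.2 C hC).2 ▸ mem_univ a
    simpa only [clk, mem_iUnion, exists_prop, and_assoc] using ha
  choose! D hDC hDl haD using hD
  refine ⟨⋃ C ∈ 𝒞, D C, mk_biUnion_le_of_forall_le (hl.trans (cantor l).le) h𝒞.2.1 hDl,
    fun C hC => closure_mono (subset_inter (subset_biUnion_of_mem hC) (hDC C hC)) (haD C hC)⟩

theorem gcSet_univ {κ : Cardinal.{u}} : GcSet κ (univ : Set X) :=
  ⟨∅, by simp, by simp, by simp, by simp⟩

theorem GcSet.inter {κ : Cardinal.{u}} (hκ : ℵ₀ ≤ κ) {G₁ G₂ : Set X}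
    (h₁ : GcSet κ G₁) (h₂ : GcSet κ G₂) : GcSet κ (G₁ ∩ G₂) := by
  obtain ⟨𝒰₁, hc₁, ho₁, he₁, hf₁⟩ := h₁
  obtain ⟨𝒰₂, hc₂, ho₂, he₂, hf₂⟩ := h₂
  refine ⟨𝒰₁ ∪ 𝒰₂, (mk_union_le _ _).trans (add_le_of_le hκ hc₁ hc₂), ?_, ?_, ?_⟩
  · rintro U (h | h); exacts [ho₁ U h, ho₂ U h]
  · rw [sInter_union, he₁, he₂]
  · rw [biInter_union, ← hf₁, ← hf₂]

theorem isTopologicalBasis_gcSet {κ : Cardinal.{u}} (hκ : ℵ₀ ≤ κ) :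
    @IsTopologicalBasis X (generateFrom {G | GcSet κ G}) {G | GcSet κ G} :=
  @IsTopologicalBasis.mk X (generateFrom _) _
    (fun _ h₁ _ h₂ _ hx => ⟨_, h₁.inter hκ h₂, hx, Subset.rfl⟩)
    (sUnion_eq_univ_iff.2 fun _ => ⟨Set.univ, gcSet_univ, trivial⟩) rfl

theorem mem_iInter_closure_of_traceFamily_subset {B : Set X} {𝒰 𝒲 : Set (Set X)} {w : X}
    (h𝒲 : ∀ V ∈ 𝒲, IsOpen V) (hw : w ∈ closure B) (hw𝒲 : w ∈ ⋂₀ 𝒲)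
    (htr : traceFamily B 𝒰 ⊆ traceFamily B 𝒲) : w ∈ ⋂ U ∈ 𝒰, closure U := by
  refine mem_iInter₂.2 fun U hU => ?_
  obtain ⟨V, hV, hVU⟩ := htr ⟨U, hU, rfl⟩
  have hVBU : V ∩ B ⊆ U := fun b ⟨hbV, hbB⟩ => (Set.ext_iff.1 hVU ⟨b, hbB⟩).1 hbV
  exact closure_mono hVBU ((h𝒲 V hV).inter_closure ⟨hw𝒲 V hV, hw⟩)

end Topology

section Cover

variable {X : Type u} [TopologicalSpace X]

def RealizesTraces (l : Cardinal.{u}) (𝒰 : X → Set (Set X)) (S : Set X) : Prop :=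
  ∀ B ⊆ S, #B ≤ l → ∀ w, ∃ z ∈ S, traceFamily B (𝒰 z) = traceFamily B (𝒰 w)

def ReflectsFiniteCovers (𝒰 : X → Set (Set X)) (S : Set X) : Prop :=
  ∀ T ⊆ S, T.Finite → ∀ ℱ ⊆ ⋃ z ∈ T, 𝒰 z,
    S ⊆ ⋃ U ∈ ℱ, closure U → ⋃ U ∈ ℱ, closure U = Set.univ

theorem closure_subset_iUnion_iInter_closure {l : Cardinal.{u}} {𝒞 : Set (Set X)}
    (h𝒞 : ⋃₀ 𝒞 = Set.univ) (ht : ∀ C ∈ 𝒞, tightness C ≤ l) {𝒰 : X → Set (Set X)}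
    (h𝒰 : ∀ x, ∀ U ∈ 𝒰 x, IsOpen U) (hx𝒰 : ∀ x, x ∈ ⋂₀ 𝒰 x) {S : Set X}
    (hsat : Saturated 𝒞 S) (htr : RealizesTraces l 𝒰 S) :
    closure S ⊆ ⋃ z ∈ S, ⋂ U ∈ 𝒰 z, closure U := by
  intro w hw
  obtain ⟨C, hC, hwC⟩ := sUnion_eq_univ_iff.1 h𝒞 w
  have hwSC : w ∈ closure (S ∩ C) := closure_minimal (hsat C hC) isClosed_closure hw
  obtain ⟨B, hBSC, hBl, hwB⟩ :=
    exists_subset_mk_le_of_tightness_le (ht C hC) inter_subset_right hwC hwSC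
  obtain ⟨z, hzS, hz⟩ := htr B (hBSC.trans inter_subset_left) hBl w
  exact mem_biUnion hzS (mem_iInter_closure_of_traceFamily_subset (h𝒰 w) hwB (hx𝒰 w) hz.le)

theorem iUnion_iInter_closure_eq_univ [CompactSpace X] {𝒰 : X → Set (Set X)}
    (h𝒰 : ∀ x, ∀ U ∈ 𝒰 x, IsOpen U) {S : Set X} (hcov : closure S ⊆ ⋃ z ∈ S, ⋂₀ 𝒰 z)
    (hS : ReflectsFiniteCovers 𝒰 S) : ⋃ z ∈ S, ⋂ U ∈ 𝒰 z, closure U = Set.univ := by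
  refine eq_univ_of_forall fun y => by_contra fun hy => ?_
  have hu : ∀ z, ∃ U, z ∈ S → U ∈ 𝒰 z ∧ y ∉ closure U := fun z => by
    by_cases hz : z ∈ S
    · obtain ⟨U, hU, hyU⟩ : ∃ U ∈ 𝒰 z, y ∉ closure U := by
        by_contra! h
        exact hy (mem_biUnion hz (mem_iInter₂.2 h))
      exact ⟨U, fun _ => ⟨hU, hyU⟩⟩
    · exact ⟨∅, fun h => absurd h hz⟩
  choose u hu𝒰 hyu using hu
  obtain ⟨T, hTS, hT, hcover⟩ := isClosed_closure.isCompact.elim_finite_subcover_image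
    (fun z hz => h𝒰 z _ (hu𝒰 z hz))
    (hcov.trans (biUnion_mono Subset.rfl fun z hz => sInter_subset_of_mem (hu𝒰 z hz)))
  have huT : ⋃ U ∈ u '' T, closure U = Set.univ := by
    refine hS T hTS hT _ (image_subset_iff.2 fun z hz => mem_biUnion hz (hu𝒰 z (hTS hz))) ?_
    rw [biUnion_image]
    exact subset_closure.trans (hcover.trans (biUnion_mono Subset.rfl fun _ _ => subset_closure))
  rw [biUnion_image] at huT
  obtain ⟨z, hz, hyz⟩ := mem_iUnion₂.1 (huT ▸ mem_univ y)
  exact hyu z (hTS hz) hyz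

theorem IsWtWitness.exists_mk_le_saturated {l κ : Cardinal.{u}} (hl : ℵ₀ ≤ l) (hκ : ℵ₀ ≤ κ)
    {𝒞 : Set (Set X)} (h𝒞 : IsWtWitness l 𝒞) {𝒰 : X → Set (Set X)} (h𝒰 : ∀ x, #(𝒰 x) ≤ κ) :
    ∃ S : Set X, #S ≤ 2 ^ (l * κ) ∧ Saturated 𝒞 S ∧ RealizesTraces l 𝒰 S ∧
      ReflectsFiniteCovers 𝒰 S := by
  set μ : Cardinal.{u} := 2 ^ (l * κ)
  have h2l : 2 ^ l ≤ μ :=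
    power_le_power_left two_ne_zero (le_mul_right (aleph0_pos.trans_le hκ).ne')
  have hlμ : l ≤ μ := (cantor l).le.trans h2l
  have hμ : ℵ₀ ≤ μ := hl.trans hlμ
  have hμl : μ ^ l = μ := by rw [← power_mul, mul_right_comm, mul_eq_self hl]
  have hμκ : μ ^ κ = μ := by rw [← power_mul, mul_assoc, mul_eq_self hκ]
  choose T₁ hT₁card hT₁ using h𝒞.exists_mk_le_mem_closure_inter hl
  choose T₂ hT₂card hT₂ using fun B : Set X =>
    exists_mk_le_witnesses fun (v : {v : Set (Set B) | #v ≤ κ}) z => traceFamily B (𝒰 z) = v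
  choose T₃ hT₃card hT₃ using fun B : Set X =>
    exists_mk_le_witnesses fun (ℱ : 𝒫 (⋃ z ∈ B, 𝒰 z)) q => q ∉ ⋃ U ∈ ℱ.1, closure U
  have hT₁μ (B : Set X) (hB : #B ≤ l) : #(⋃ a ∈ B, T₁ a) ≤ μ :=
    mk_biUnion_le_of_forall_le hμ (hB.trans hlμ) fun a _ => (hT₁card a).trans h2l
  have hT₂μ (B : Set X) (hB : #B ≤ l) : #(T₂ B) ≤ μ := by
    refine (hT₂card B).trans ((mk_bounded_set_le _ κ).trans ?_)
    refine hμκ ▸ power_le_power_right (max_le ?_ hμ)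
    rw [mk_set]
    exact (power_le_power_left two_ne_zero hB).trans h2l
  have hT₃μ (B : Set X) (hB : #B ≤ l) : #(T₃ B) ≤ μ := by
    refine (hT₃card B).trans ((mk_powerset _).trans_le (power_le_power_left two_ne_zero ?_))
    exact (mk_biUnion_le _ _).trans (mul_le_mul' hB (ciSup_le' fun z => h𝒰 z))
  obtain ⟨S, hSμ, hS⟩ := exists_mk_le_closed_under hl hμ hμl
    (fun B => (⋃ a ∈ B, T₁ a) ∪ T₂ B ∪ T₃ B) fun B hB =>
      (mk_union_le _ _).trans <| add_le_of_le hμ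
        ((mk_union_le _ _).trans (add_le_of_le hμ (hT₁μ B hB) (hT₂μ B hB))) (hT₃μ B hB)
  refine ⟨S, hSμ, fun C hC a ha => ?_, fun B hBS hB w => ?_, fun T hTS hT ℱ hℱ hSℱ => ?_⟩
  · have hT₁S : T₁ a ⊆ S := fun x hx =>
      hS {a} (singleton_subset_iff.2 ha) (mk_singleton a ▸ one_le_aleph0.trans hl)
        (Or.inl (Or.inl (mem_biUnion rfl hx)))
    exact closure_mono (inter_subset_inter_left C hT₁S) (hT₁ a C hC)
  · obtain ⟨z, hz, hzw⟩ := hT₂ B ⟨_, mk_image_le.trans (h𝒰 w)⟩ ⟨w, rfl⟩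
    exact ⟨z, hS B hBS hB (Or.inl (Or.inr hz)), hzw⟩
  · by_contra hne
    obtain ⟨y, hy⟩ := (ne_univ_iff_exists_notMem _).1 hne
    obtain ⟨q, hq, hqℱ⟩ := hT₃ T ⟨ℱ, hℱ⟩ ⟨y, hy⟩
    exact hqℱ (hSℱ (hS T hTS (hT.lt_aleph0.le.trans hl) (Or.inr hq)))

theorem IsWtWitness.exists_mk_le_iUnion_sInter_eq_univ [CompactSpace X] {l κ : Cardinal.{u}}
    (hl : ℵ₀ ≤ l) (hκ : ℵ₀ ≤ κ) {𝒞 : Set (Set X)} (h𝒞 : IsWtWitness l 𝒞)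
    {𝒰 : X → Set (Set X)} (h𝒰card : ∀ x, #(𝒰 x) ≤ κ) (h𝒰open : ∀ x, ∀ U ∈ 𝒰 x, IsOpen U)
    (hx𝒰 : ∀ x, x ∈ ⋂₀ 𝒰 x) (h𝒰closure : ∀ x, ⋂₀ 𝒰 x = ⋂ U ∈ 𝒰 x, closure U) :
    ∃ S : Set X, #S ≤ 2 ^ (l * κ) ∧ ⋃ z ∈ S, ⋂₀ 𝒰 z = Set.univ := by
  obtain ⟨S, hSμ, hsat, htr, hrefl⟩ := h𝒞.exists_mk_le_saturated hl hκ h𝒰card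
  have hcov := closure_subset_iUnion_iInter_closure h𝒞.1 (fun C hC => (h𝒞.2.2 C hC).1)
    h𝒰open hx𝒰 hsat htr
  simp only [← h𝒰closure] at hcov
  have hS := iUnion_iInter_closure_eq_univ h𝒰open hcov hrefl
  simp only [← h𝒰closure] at hS
  exact ⟨S, hSμ, hS⟩

end Cover

/-- Corollary 3.5: for compact `X`, `L(X^c_κ) ≤ 2^{wt(X)·κ}`. -/
theorem stmt11 {X : Type u} [TopologicalSpace X] [CompactSpace X]
    (κ : Cardinal.{u}) (hκ : ℵ₀ ≤ κ) :
    @LindelofNumber X (generateFrom {G : Set X | GcSet κ G}) ≤ 2 ^ (wt X * κ) := by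
  obtain ⟨hl, 𝒞, h𝒞⟩ := exists_isWtWitness_wt X
  refine csInf_le' ⟨hκ.trans ((le_mul_left (aleph0_pos.trans_le hl).ne').trans (cantor _).le),
    fun 𝒱 h𝒱 h𝒱cov => ?_⟩
  choose V hV𝒱 hxV using sUnion_eq_univ_iff.1 h𝒱cov
  choose G hG hxG hGV using fun x => @IsTopologicalBasis.exists_subset_of_mem_open X
    (generateFrom _) _ (isTopologicalBasis_gcSet hκ) _ _ (hxV x) (h𝒱 _ (hV𝒱 x))
  choose 𝒰 h𝒰card h𝒰open h𝒰 h𝒰closure using hG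
  obtain ⟨S, hSμ, hS⟩ := h𝒞.exists_mk_le_iUnion_sInter_eq_univ hl hκ h𝒰card h𝒰open
    (fun x => h𝒰 x ▸ hxG x) fun x => (h𝒰 x).symm.trans (h𝒰closure x)
  refine ⟨V '' S, image_subset_iff.2 fun z _ => hV𝒱 z, mk_image_le.trans hSμ, ?_⟩
  rw [sUnion_image, ← univ_subset_iff, ← hS]
  exact biUnion_mono Subset.rfl fun z _ => h𝒰 z ▸ hGV z
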